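/- Fix a finite alphabet 𝒳 with |𝒳| ≥ 2 and model each Ising channel use with input x and state σ, driven by a noise bit b ∈ {0,1}, as producing output y = x if b = 0 and y = σ if b = 1, with new state x. Define the full encoder and decoder of the paper's scheme recursively over a message sequence ν₁, …, ν_n ∈ 𝒳ⁿ: the first symbol ν₁ is transmitted twice and decoded as the second output; thereafter each symbol is handled by the per-symbol rule (repeat twice if equal to the previous symbol; otherwise send once and resend only if the feedback output differs from the symbol), and the decoder decodes a received output y immediately if y differs from the previously decoded symbol, and otherwise decodes the subsequent output. Then for every message sequence ν₁, …, ν_n and every sequence of noise bits, the decoder's output sequence equals ν₁, …, ν_n exactly (the scheme is zero-error). -/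

import Mathlib

/-- One use of the (noise-bit driven) Ising channel: with input `x`, state `σ`
and noise bit `b`, the output is `x` if `b = false` (i.e. `b = 0`) and `σ` if
`b = true` (i.e. `b = 1`); the new state is the input `x`. -/
def isingOut {𝒳 : Type} (x σ : 𝒳) (b : Bool) : 𝒳 :=
  if b = false then x else σ

/-- Encoder for the tail of the message (all symbols after the first): given
the current channel state `σ` (the previously transmitted symbol), the list of
remaining message symbols, the noise-bit stream `b` and the current time `t`,
it produces the stream of channel outputs. A symbol equal to the previous one
is transmitted twice; otherwise it is transmitted once and retransmitted only
if the feedback output differs from it. Each channel use updates the state to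
its input. -/
def encodeTail {𝒳 : Type} [DecidableEq 𝒳] (σ : 𝒳) :
    List 𝒳 → (ℕ → Bool) → ℕ → List 𝒳
  | [], _, _ => []
  | ν :: rest, b, t =>
    if ν = σ then
      isingOut ν σ (b t) :: isingOut ν ν (b (t + 1)) ::
        encodeTail ν rest b (t + 2)
    else if isingOut ν σ (b t) = ν then
      isingOut ν σ (b t) :: encodeTail ν rest b (t + 1)
    else
      isingOut ν σ (b t) :: isingOut ν ν (b (t + 1)) ::
        encodeTail ν rest b (t + 2)

/-- Full encoder: from initial channel state `s₀`, the first symbol `ν₁` is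
transmitted twice (after the first use the state is `ν₁`), and the remaining
symbols are handled by `encodeTail`. -/
def encode {𝒳 : Type} [DecidableEq 𝒳] (s₀ : 𝒳) :
    List 𝒳 → (ℕ → Bool) → List 𝒳
  | [], _ => []
  | ν :: rest, b =>
      isingOut ν s₀ (b 0) :: isingOut ν ν (b 1) :: encodeTail ν rest b 2

/-- Decoder for the outputs following the first decoded symbol: `prev` is the
previously decoded symbol; a received output `y` is decoded immediately if
`y ≠ prev`, and otherwise the subsequent output is decoded. -/
def decodeTail {𝒳 : Type} [DecidableEq 𝒳] (prev : 𝒳) : List 𝒳 → List 𝒳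
  | [] => []
  | y :: ys =>
    if y ≠ prev then y :: decodeTail y ys
    else
      match ys with
      | [] => []
      | y' :: ys' => y' :: decodeTail y' ys'

/-- Full decoder: the first symbol is decoded as the second received output,
and the remaining outputs are decoded by `decodeTail`. -/
def decode {𝒳 : Type} [DecidableEq 𝒳] : List 𝒳 → List 𝒳
  | [] => []
  | [_] => []
  | _ :: y₂ :: ys => y₂ :: decodeTail y₂ ys

/-!
The last decoded symbol always equals the channel state `σ`, i.e. the previous message
symbol. A symbol `ν = σ` produces two outputs, both equal to `ν`, and the decoder takes the
second. A symbol `ν ≠ σ` produces either `ν` (which differs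
from the decoder state, so it is decoded at once and no retransmission occurs) or `σ` (which
the decoder skips, and then the retransmission, made in state `ν`, outputs `ν`). In every case
the decoder reads off `ν` and ends in state `ν`, in step with the channel.
-/

section IsingChannel

variable {𝒳 : Type}

@[simp]
theorem isingOut_self (x : 𝒳) (b : Bool) : isingOut x x b = x := by
  cases b <;> rfl

theorem isingOut_eq_state_of_ne {x σ : 𝒳} {b : Bool} (h : isingOut x σ b ≠ x) :
    isingOut x σ b = σ := by
  cases b <;> simp_all [isingOut]

variable [DecidableEq 𝒳]

theorem decodeTail_cons_of_ne {prev y : 𝒳} (ys : List 𝒳) (h : y ≠ prev) :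
    decodeTail prev (y :: ys) = y :: decodeTail y ys := by
  rw [decodeTail.eq_def]
  simp [h]

theorem decodeTail_cons_cons_self (prev y : 𝒳) (ys : List 𝒳) :
    decodeTail prev (prev :: y :: ys) = y :: decodeTail y ys := by
  rw [decodeTail.eq_def]
  simp

theorem decodeTail_encodeTail_cons (σ ν : 𝒳) (rest : List 𝒳) (b : ℕ → Bool) (t : ℕ) :
    ∃ t', decodeTail σ (encodeTail σ (ν :: rest) b t) =
      ν :: decodeTail ν (encodeTail ν rest b t') := by
  by_cases hν : ν = σ
  · subst hν
    exact ⟨t + 2, by rw [encodeTail, if_pos rfl, isingOut_self, isingOut_self,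
      decodeTail_cons_cons_self]⟩
  by_cases hy : isingOut ν σ (b t) = ν
  · exact ⟨t + 1, by rw [encodeTail, if_neg hν, if_pos hy, hy, decodeTail_cons_of_ne _ hν]⟩
  · exact ⟨t + 2, by rw [encodeTail, if_neg hν, if_neg hy, isingOut_eq_state_of_ne hy,
      isingOut_self, decodeTail_cons_cons_self]⟩

theorem decodeTail_encodeTail (σ : 𝒳) (msg : List 𝒳) (b : ℕ → Bool) (t : ℕ) :
    decodeTail σ (encodeTail σ msg b t) = msg := by
  induction msg generalizing σ t with
  | nil => rfl
  | cons ν rest ih =>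
    obtain ⟨t', h⟩ := decodeTail_encodeTail_cons σ ν rest b t
    rw [h, ih]

end IsingChannel

theorem stmt11_general (𝒳 : Type) [DecidableEq 𝒳] (s₀ : 𝒳) (ν : List 𝒳) (b : ℕ → Bool) :
    decode (encode s₀ ν b) = ν := by
  cases ν with
  | nil => rfl
  | cons ν₁ rest => simp [encode, decode, decodeTail_encodeTail]

/-- Zero-error property of the coding scheme: for every message sequence and
every sequence of noise bits, the decoded sequence equals the message. -/
theorem stmt11 (𝒳 : Type) [DecidableEq 𝒳] [Fintype 𝒳]
    (hcard : 2 ≤ Fintype.card 𝒳) (s₀ : 𝒳) (ν : List 𝒳) (b : ℕ → Bool) :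
    decode (encode s₀ ν b) = ν :=
  stmt11_general 𝒳 s₀ ν b
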